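/- arXiv:1211.2057 — 12 statements merged into one kernel-verified Lean document; each statement's English description precedes it below -/
import Mathlib

section
/- There is no continuous function u on [0,1] with ∫₀¹ u(x)² dx = 1 and ∫₀¹ u(x) dx = 0 whose total variation on [0,1] is strictly less than 2. -/
/-- There is no continuous function `u` on `[0,1]` with `∫ u² = 1`, `∫ u = 0`,
and total variation strictly less than `2`. -/
theorem no_normalized_zero_mean_continuous_function_with_tv_lt_two :
    ¬ ∃ u : ℝ → ℝ, ContinuousOn u (Set.Icc 0 1) ∧
      (∫ x in (0:ℝ)..1, (u x) ^ 2) = 1 ∧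
      (∫ x in (0:ℝ)..1, u x) = 0 ∧
      eVariationOn u (Set.Icc 0 1) < 2 := by
  rintro ⟨u, hc, hsq, hmean, htv⟩
  have hIcc : Set.uIcc (0:ℝ) 1 = Set.Icc 0 1 := Set.uIcc_of_le zero_le_one
  have hu_int : IntervalIntegrable u MeasureTheory.volume 0 1 :=
    (hIcc ▸ hc).intervalIntegrable
  have husq_int : IntervalIntegrable (fun x => (u x) ^ 2) MeasureTheory.volume 0 1 :=
    ((hIcc ▸ hc).pow 2).intervalIntegrable
  obtain ⟨a, ha, hmax⟩ :=
    (isCompact_Icc (a := (0:ℝ)) (b := 1)).exists_isMaxOn ⟨0, by norm_num⟩ hc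
  obtain ⟨b, hb, hmin⟩ :=
    (isCompact_Icc (a := (0:ℝ)) (b := 1)).exists_isMinOn ⟨0, by norm_num⟩ hc
  set M := u a with hM
  set m := u b with hm
  -- nonneg integrand
  have hpt : ∀ x ∈ Set.Icc (0:ℝ) 1, 0 ≤ (M - u x) * (u x - m) := by
    intro x hx
    have h1 : u x ≤ M := hmax hx
    have h2 : m ≤ u x := hmin hx
    nlinarith
  have hI : 0 ≤ ∫ x in (0:ℝ)..1, (M - u x) * (u x - m) := by
    apply intervalIntegral.integral_nonneg zero_le_one
    intro x hx
    exact hpt x hx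
  have hexp : (∫ x in (0:ℝ)..1, (M - u x) * (u x - m))
      = (M + m) * (∫ x in (0:ℝ)..1, u x) - (∫ x in (0:ℝ)..1, (u x) ^ 2)
        - (M * m) := by
    rw [← intervalIntegral.integral_const_mul, ← intervalIntegral.integral_sub
      (hu_int.const_mul _) husq_int]
    have : (∫ x in (0:ℝ)..1, (M * m)) = M * m := by simp
    rw [← this, ← intervalIntegral.integral_sub
      ((hu_int.const_mul _).sub husq_int) intervalIntegrable_const]
    apply intervalIntegral.integral_congr
    intro x _
    ring
  rw [hexp, hmean, hsq] at hI
  have hMm : M * m ≤ -1 := by linarith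
  have hmb : m ≤ M := hmin ha
  have hge : 2 ≤ M - m := by nlinarith [sq_nonneg (M + m)]
  have hedist : edist (u a) (u b) ≤ eVariationOn u (Set.Icc 0 1) :=
    eVariationOn.edist_le u ha hb
  have h2le : (2 : ENNReal) ≤ edist (u a) (u b) := by
    rw [edist_dist, Real.dist_eq]
    have : (2:ℝ) ≤ |u a - u b| := le_trans hge (le_abs_self _)
    calc (2 : ENNReal) = ENNReal.ofReal 2 := by norm_num
    _ ≤ ENNReal.ofReal |u a - u b| := ENNReal.ofReal_le_ofReal this
  exact absurd htv (not_lt.mpr (le_trans h2le hedist))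
end

section
/- Let U be a Banach space, H a Hilbert space, K : U → H a bounded linear operator, and J : U → [0,∞] a convex, positively one-homogeneous functional. Suppose u₀ minimizes J over all u with ‖Ku‖_H = 1, with λ₀ = J(u₀) > 0. Then p₀ := λ₀ K*K u₀ is a subgradient of J at u₀, i.e., ⟨p₀, u₀⟩ = J(u₀) and ⟨p₀, u⟩ ≤ J(u) for all u ∈ U; hence u₀ satisfies the singular vector relation λ₀ K*K u₀ ∈ ∂J(u₀). -/
open scoped RealInnerProductSpace

/-- The ground state is a singular vector: if `u₀` minimizes the convex,
positively one-homogeneous `J` over `{‖Ku‖ = 1}` with value `λ₀ = J u₀ > 0`, then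
`p₀ = λ₀ K*K u₀` is a subgradient of `J` at `u₀`:
`⟨p₀, u₀⟩ = J u₀` and `⟨p₀, u⟩ ≤ J u` for all `u`. -/
theorem ground_state_is_singular_vector
    {U H : Type*} [NormedAddCommGroup U] [NormedSpace ℝ U]
    [NormedAddCommGroup H] [InnerProductSpace ℝ H]
    (K : U →L[ℝ] H) (J : U → ℝ) (hJnn : ∀ u, 0 ≤ J u)
    (hconv : ∀ (u v : U) (t : ℝ), 0 ≤ t → t ≤ 1 →
      J (t • u + (1 - t) • v) ≤ t * J u + (1 - t) * J v)
    (hhom : ∀ (c : ℝ), 0 < c → ∀ u, J (c • u) = c * J u)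
    (u₀ : U) (hnorm : ‖K u₀‖ = 1)
    (hmin : ∀ u : U, ‖K u‖ = 1 → J u₀ ≤ J u)
    (lam₀ : ℝ) (hlam : lam₀ = J u₀) (hlampos : 0 < lam₀) :
    lam₀ * ⟪K u₀, K u₀⟫ = J u₀ ∧ ∀ u : U, lam₀ * ⟪K u₀, K u⟫ ≤ J u := by
  constructor
  · rw [real_inner_self_eq_norm_sq, hnorm]
    simpa using hlam
  · intro u
    by_cases hK : K u = 0
    · rw [hK]
      simpa using hJnn u
    · have hc : (0 : ℝ) < ‖K u‖ := norm_pos_iff.mpr hK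
      set c : ℝ := ‖K u‖ with hcdef
      set v : U := c⁻¹ • u with hvdef
      have hKv : ‖K v‖ = 1 := by
        rw [hvdef, map_smul, norm_smul, norm_inv, Real.norm_eq_abs,
          abs_of_pos hc, inv_mul_cancel₀ hc.ne']
      have hcs : ⟪K u₀, K v⟫ ≤ 1 := by
        calc ⟪K u₀, K v⟫ ≤ ‖K u₀‖ * ‖K v‖ := real_inner_le_norm _ _
          _ = 1 := by rw [hnorm, hKv, one_mul]
      have hJv : lam₀ ≤ J v := hlam ▸ hmin v hKv
      have huv : u = c • v := by
        rw [hvdef, smul_smul, mul_inv_cancel₀ hc.ne', one_smul]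
      have key : lam₀ * ⟪K u₀, K v⟫ ≤ J v :=
        le_trans (by nlinarith) hJv
      calc lam₀ * ⟪K u₀, K u⟫ = c * (lam₀ * ⟪K u₀, K v⟫) := by
            rw [huv, map_smul, real_inner_smul_right]; ring
        _ ≤ c * J v := by nlinarith
        _ = J u := by rw [← hhom c hc v, ← huv]
end

section
/- Let J be a proper, positively one-homogeneous convex functional and K a bounded linear operator to a Hilbert space. Then u₀ minimizes J over {u : ‖Ku‖ = 1, u ∈ ker(J)^⊥} with value λ₀ = J(u₀) if and only if ũ := u₀/λ₀ maximizes ‖Ku‖ over {u ∈ ker(J)^⊥ : J(u) ≤ 1}, with maximal value 1/λ₀ (assuming λ₀ > 0). -/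
open scoped RealInnerProductSpace

/-- Equivalence of the two ground state definitions for a proper, positively
one-homogeneous convex functional: `u₀` minimizes `J` over
`{u ∈ ker(J)^⊥ : ‖Ku‖ = 1}` with value `λ₀ = J u₀ > 0` if and only if
`ũ = u₀/λ₀` maximizes `‖Ku‖` over `{u ∈ ker(J)^⊥ : J u ≤ 1}` with value `1/λ₀`. -/
theorem ground_state_definitions_equivalent
    {U H : Type*} [NormedAddCommGroup U] [NormedSpace ℝ U]
    [NormedAddCommGroup H] [InnerProductSpace ℝ H]
    (K : U →L[ℝ] H) (J : U → ℝ) (hJnn : ∀ u, 0 ≤ J u)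
    (hconv : ∀ (u v : U) (t : ℝ), 0 ≤ t → t ≤ 1 →
      J (t • u + (1 - t) • v) ≤ t * J u + (1 - t) * J v)
    (hhom : ∀ (c : ℝ), 0 < c → ∀ u, J (c • u) = c * J u)
    (u₀ : U) (lam₀ : ℝ) (hlam : lam₀ = J u₀) (hlampos : 0 < lam₀) :
    let kerPerp : U → Prop := fun u => ∀ v : U, J v = 0 → ⟪K u, K v⟫ = 0
    (‖K u₀‖ = 1 ∧ kerPerp u₀ ∧ ∀ u : U, ‖K u‖ = 1 → kerPerp u → J u₀ ≤ J u) ↔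
      (J (lam₀⁻¹ • u₀) ≤ 1 ∧ kerPerp (lam₀⁻¹ • u₀) ∧ ‖K (lam₀⁻¹ • u₀)‖ = lam₀⁻¹ ∧
        ∀ u : U, J u ≤ 1 → kerPerp u → ‖K u‖ ≤ lam₀⁻¹) := by
  intro kerPerp
  have hinv : (0:ℝ) < lam₀⁻¹ := inv_pos.mpr hlampos
  have hperp_smul : ∀ (c : ℝ) (u : U), kerPerp u → kerPerp (c • u) := by
    intro c u hu v hv
    rw [map_smul, real_inner_smul_left, hu v hv, mul_zero]
  constructor
  · rintro ⟨hnorm, hperp, hmin⟩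
    refine ⟨?_, hperp_smul _ _ hperp, ?_, ?_⟩
    · rw [hhom _ hinv, ← hlam, inv_mul_cancel₀ (ne_of_gt hlampos)]
    · rw [map_smul, norm_smul, hnorm, mul_one, Real.norm_eq_abs,
        abs_of_pos hinv]
    · intro u hu hpu
      rcases eq_or_lt_of_le (norm_nonneg (K u)) with h0 | h0
      · rw [← h0]; exact le_of_lt hinv
      · set c := ‖K u‖⁻¹ with hc
        have hcpos : 0 < c := inv_pos.mpr h0
        have hnc : ‖K (c • u)‖ = 1 := by
          rw [map_smul, norm_smul, Real.norm_eq_abs, abs_of_pos hcpos,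
            inv_mul_cancel₀ (ne_of_gt h0)]
        have := hmin (c • u) hnc (hperp_smul c u hpu)
        rw [hhom c hcpos, ← hlam] at this
        have hle : lam₀ ≤ c := le_trans this (by
          calc c * J u ≤ c * 1 := by
                exact mul_le_mul_of_nonneg_left hu (le_of_lt hcpos)
            _ = c := mul_one c)
        calc ‖K u‖ = c⁻¹ := by rw [hc, inv_inv]
          _ ≤ lam₀⁻¹ := inv_anti₀ hlampos hle
  · rintro ⟨hJle, hperp, hnorm, hmax⟩
    have hu0 : u₀ = lam₀ • (lam₀⁻¹ • u₀) := by
      rw [smul_smul, mul_inv_cancel₀ (ne_of_gt hlampos), one_smul]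
    have hn0 : ‖K u₀‖ = 1 := by
      rw [hu0, map_smul, norm_smul, hnorm, Real.norm_eq_abs,
        abs_of_pos hlampos, mul_inv_cancel₀ (ne_of_gt hlampos)]
    refine ⟨hn0, ?_, ?_⟩
    · have := hperp_smul lam₀ _ hperp
      rwa [← hu0] at this
    · intro u hn hpu
      have hJu : 0 < J u := by
        rcases eq_or_lt_of_le (hJnn u) with h0 | h0
        · exfalso
          have := hpu u h0.symm
          rw [real_inner_self_eq_norm_sq, hn] at this
          norm_num at this
        · exact h0
      have h1 : J ((J u)⁻¹ • u) ≤ 1 := by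
        rw [hhom _ (inv_pos.mpr hJu), inv_mul_cancel₀ (ne_of_gt hJu)]
      have h2 := hmax _ h1 (hperp_smul (J u)⁻¹ u hpu)
      rw [map_smul, norm_smul, hn, mul_one, Real.norm_eq_abs,
        abs_of_pos (inv_pos.mpr hJu)] at h2
      rw [← hlam]
      have h3 := inv_anti₀ (inv_pos.mpr hJu) h2; rwa [inv_inv, inv_inv] at h3
end

section
/- Consider U = ℓ¹(ℝ²), J(u) = ‖u‖₁, and a linear operator K with K*K equal to the 2×2 matrix [[1, 2ε],[2ε, ε]] for 0 < ε < 1/4. Then u₁ = (0,1)ᵀ is not a singular vector: there is no λ > 0 with λ K*K u₁ ∈ ∂‖·‖₁(u₁). -/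
/-- Failure of the Rayleigh principle: for `K*K = [[1, 2ε],[2ε, ε]]` with
`0 < ε < 1/4` and `J = ‖·‖₁` on `ℝ²`, the vector `u₁ = (0,1)ᵀ` is not a
singular vector: there is no `λ > 0` with `λ K*K u₁ ∈ ∂‖·‖₁(u₁)`. -/
theorem rayleigh_principle_failure (ε : ℝ) (hε : 0 < ε) (hε' : ε < 1/4) :
    ¬ ∃ lam : ℝ, 0 < lam ∧
      ∀ v : Fin 2 → ℝ,
        (∑ i, |(![(0:ℝ), 1]) i|) +
          ∑ i, (lam • (Matrix.mulVec !![1, 2*ε; 2*ε, ε] ![(0:ℝ), 1])) i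
            * (v i - (![(0:ℝ), 1]) i)
        ≤ ∑ i, |v i| := by
  rintro ⟨lam, hlam, h⟩
  have h1 := h ![0, 0]
  have h2 := h ![1, 1]
  simp [Fin.sum_univ_two, Matrix.mulVec, dotProduct] at h1 h2
  nlinarith [mul_pos hlam hε]
end

section
/- Let TV* be the total variation on [0,1] including boundary terms, so that for u ∈ W^{1,1}([0,1]) ∩ C([0,1]), TV*(u) = ∫₀¹|u′| dx + |u(0)| + |u(1)|. Then every continuously differentiable u with ∫₀¹ u² dx = 1 satisfies TV*(u) ≥ 2, and the constant function u₀ ≡ 1 achieves TV*(u₀) = 2 with ‖u₀‖_{L²} = 1; hence u₀ is a ground state with smallest singular value λ₀ = 2. -/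
/-!
Since `∫₀¹ u² = 1`, the continuous function `u` satisfies `|u c| ≥ 1` at a maximum point `c` of
`u²`. By the fundamental theorem of calculus, `∫₀¹ |u'|` dominates `|u c - u 0| + |u 1 - u c|`,
and the triangle inequality with the boundary terms `|u 0| + |u 1|` gives `TV*(u) ≥ 2 |u c| ≥ 2`.
-/

open Set MeasureTheory intervalIntegral

theorem exists_mem_Icc_integral_le_mul {f : ℝ → ℝ} {a b : ℝ} (hab : a ≤ b)
    (hf : ContinuousOn f (Icc a b)) : ∃ c ∈ Icc a b, ∫ x in a..b, f x ≤ (b - a) * f c := by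
  obtain ⟨c, hc, hmax⟩ := isCompact_Icc.exists_isMaxOn (nonempty_Icc.2 hab) hf
  refine ⟨c, hc, ?_⟩
  calc ∫ x in a..b, f x ≤ ∫ _ in a..b, f c :=
        integral_mono_on hab (hf.intervalIntegrable_of_Icc hab) intervalIntegrable_const
          fun _ hx ↦ hmax hx
    _ = (b - a) * f c := by rw [intervalIntegral.integral_const, smul_eq_mul]

section DerivWithinIcc

variable {u : ℝ → ℝ} {a b x y : ℝ}

theorem integral_derivWithin_Icc_eq_sub (hu : ContDiffOn ℝ 1 u (Icc a b))
    (hax : a ≤ x) (hxy : x ≤ y) (hyb : y ≤ b) :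
    ∫ t in x..y, derivWithin u (Icc a b) t = u y - u x := by
  rcases hxy.eq_or_lt with rfl | hlt
  · simp
  have hsub : Icc x y ⊆ Icc a b := Icc_subset_Icc hax hyb
  have hu' : ContinuousOn (derivWithin u (Icc a b)) (Icc a b) :=
    hu.continuousOn_derivWithin (uniqueDiffOn_Icc ((hax.trans_lt hlt).trans_le hyb)) le_rfl
  refine integral_eq_sub_of_hasDeriv_right_of_le hxy (hu.continuousOn.mono hsub) (fun t ht ↦ ?_)
    ((hu'.mono hsub).intervalIntegrable_of_Icc hxy)
  have hnhds : Icc a b ∈ nhds t := Icc_mem_nhds (hax.trans_lt ht.1) (ht.2.trans_le hyb)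
  exact ((hu.differentiableOn one_ne_zero t (mem_of_mem_nhds hnhds)).hasDerivWithinAt.hasDerivAt
    hnhds).hasDerivWithinAt

theorem abs_sub_le_integral_abs_derivWithin_Icc (hu : ContDiffOn ℝ 1 u (Icc a b))
    (hax : a ≤ x) (hxy : x ≤ y) (hyb : y ≤ b) :
    |u y - u x| ≤ ∫ t in x..y, |derivWithin u (Icc a b) t| := by
  rw [← integral_derivWithin_Icc_eq_sub hu hax hxy hyb]
  exact abs_integral_le_integral_abs hxy

theorem abs_sub_add_abs_sub_le_integral_abs_derivWithin_Icc (hu : ContDiffOn ℝ 1 u (Icc a b))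
    {c : ℝ} (hc : c ∈ Icc a b) :
    |u c - u a| + |u b - u c| ≤ ∫ t in a..b, |derivWithin u (Icc a b) t| := by
  rcases hc.1.eq_or_lt with rfl | hac
  · rcases hc.2.eq_or_lt with rfl | hcb
    · simp
    simpa using abs_sub_le_integral_abs_derivWithin_Icc hu le_rfl hcb.le le_rfl
  have hint : IntervalIntegrable (fun t ↦ |derivWithin u (Icc a b) t|) volume a b :=
    (hu.continuousOn_derivWithin (uniqueDiffOn_Icc (hac.trans_le hc.2)) le_rfl).abs
      |>.intervalIntegrable_of_Icc (hc.1.trans hc.2)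
  calc |u c - u a| + |u b - u c|
      ≤ (∫ t in a..c, |derivWithin u (Icc a b) t|) + ∫ t in c..b, |derivWithin u (Icc a b) t| :=
        add_le_add (abs_sub_le_integral_abs_derivWithin_Icc hu le_rfl hc.1 hc.2)
          (abs_sub_le_integral_abs_derivWithin_Icc hu hc.1 hc.2 le_rfl)
    _ = ∫ t in a..b, |derivWithin u (Icc a b) t| :=
        integral_add_adjacent_intervals
          (hint.mono_set (uIcc_subset_uIcc_left (Icc_subset_uIcc hc)))
          (hint.mono_set (uIcc_subset_uIcc_right (Icc_subset_uIcc hc)))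

end DerivWithinIcc

/-- For the total variation with boundary terms
`TV*(u) = ∫₀¹ |u'| + |u 0| + |u 1|` (for `C¹` functions on `[0,1]`), every
continuously differentiable `u` with `∫₀¹ u² = 1` satisfies `TV*(u) ≥ 2`,
and the constant function `u₀ ≡ 1` attains `TV*(u₀) = 2` with unit `L²` norm;
hence `u₀` is a ground state with smallest singular value `λ₀ = 2`. -/
theorem tv_star_ground_state_constant_one :
    (∀ u : ℝ → ℝ, ContDiffOn ℝ 1 u (Set.Icc 0 1) →
      (∫ x in (0:ℝ)..1, (u x) ^ 2) = 1 →
      2 ≤ (∫ x in (0:ℝ)..1, |derivWithin u (Set.Icc 0 1) x|) + |u 0| + |u 1|) ∧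
    ((∫ x in (0:ℝ)..1, |derivWithin (fun _ : ℝ => (1:ℝ)) (Set.Icc 0 1) x|)
        + |(1:ℝ)| + |(1:ℝ)| = 2) ∧
    (∫ x in (0:ℝ)..1, ((1:ℝ)) ^ 2) = 1 := by
  refine ⟨fun u hu hnorm ↦ ?_, by norm_num, by simp⟩
  obtain ⟨c, hc, hc_sq⟩ := exists_mem_Icc_integral_le_mul zero_le_one (hu.continuousOn.pow 2)
  have hc_one : 1 ≤ |u c| := one_le_sq_iff_one_le_abs _ |>.1 (by simpa [hnorm] using hc_sq)
  have hvar := abs_sub_add_abs_sub_le_integral_abs_derivWithin_Icc hu hc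
  have htri0 := abs_sub_abs_le_abs_sub (u c) (u 0)
  have htri1 := abs_sub_abs_le_abs_sub (u c) (u 1)
  rw [abs_sub_comm (u c) (u 1)] at htri1
  linarith
end

section
/- Let J be convex and positively one-homogeneous, and let u_λ be a singular vector with singular value λ > 0, i.e., λK*Ku_λ ∈ ∂J(u_λ) and ‖Ku_λ‖_H = 1. If the data is f = γKu_λ with γ > αλ > 0, then û = (γ − αλ)u_λ is a minimizer of u ↦ (1/2)‖Ku − f‖²_H + αJ(u). -/
/-!
Write `w = K u_λ` and `c = γ - αλ`. For a positively one-homogeneous `J`, testing the subgradient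
inequality at `u_λ` against `t • u_λ` (`t = 2, 1/2`) forces `J u_λ = λ ⟪w, w⟫ = λ`, so the
subgradient inequality becomes the global linear bound `λ ⟪w, K v⟫ ≤ J v`. Inserting it into the
objective and completing the square gives
`½‖Ku - γw‖² + αJ u ≥ ½‖Ku - c w‖² + ½(γ² - c²) ≥ ½(αλ)² + αcλ`,
and the right-hand side is the value of the objective at `c • u_λ`.
-/

open scoped RealInnerProductSpace

section Homogeneous

variable {U : Type*} [AddCommGroup U] [Module ℝ U] {J : U → ℝ} {ℓ : U →ₗ[ℝ] ℝ} {u : U}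

theorem eq_of_subgradient_of_homogeneous (hhom : ∀ c : ℝ, 0 < c → ∀ v, J (c • v) = c * J v)
    (hsub : ∀ v, J u + ℓ (v - u) ≤ J v) : J u = ℓ u := by
  have key : ∀ t : ℝ, 0 < t → (t - 1) * ℓ u ≤ (t - 1) * J u := fun t ht => by
    have h := hsub (t • u)
    rw [hhom t ht, map_sub, map_smul, smul_eq_mul] at h
    linarith
  have h2 := key 2 two_pos
  have h12 := key (1 / 2) one_half_pos
  linarith

theorem le_of_subgradient_of_homogeneous (hhom : ∀ c : ℝ, 0 < c → ∀ v, J (c • v) = c * J v)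
    (hsub : ∀ v, J u + ℓ (v - u) ≤ J v) (v : U) : ℓ v ≤ J v := by
  have h := hsub v
  rw [map_sub, eq_of_subgradient_of_homogeneous hhom hsub] at h
  linarith

end Homogeneous

theorem half_norm_sub_smul_sq_add_inner {H : Type*} [NormedAddCommGroup H]
    [InnerProductSpace ℝ H] (x w : H) (a b : ℝ) :
    (1 / 2) * ‖x - a • w‖ ^ 2 + (a - b) * ⟪w, x⟫
      = (1 / 2) * ‖x - b • w‖ ^ 2 + (1 / 2) * (a ^ 2 - b ^ 2) * ‖w‖ ^ 2 := by
  simp only [norm_sub_sq_real, real_inner_smul_right, norm_smul, mul_pow, Real.norm_eq_abs,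
    sq_abs, real_inner_comm w x]
  ring

theorem singular_vector_exact_reconstruction_clean_data_general
    {U H : Type*} [NormedAddCommGroup U] [NormedSpace ℝ U]
    [NormedAddCommGroup H] [InnerProductSpace ℝ H]
    (K : U →L[ℝ] H) (J : U → ℝ)
    (hhom : ∀ (c : ℝ), 0 < c → ∀ u, J (c • u) = c * J u)
    (ulam : U) (lam : ℝ) (hnorm : ‖K ulam‖ = 1)
    (hsv : ∀ v : U, J ulam + lam * ⟪K ulam, K v - K ulam⟫ ≤ J v)
    (γ α : ℝ) (hα : 0 < α) (hγ : α * lam < γ) :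
    ∀ u : U,
      (1/2) * ‖K ((γ - α * lam) • ulam) - γ • K ulam‖ ^ 2 + α * J ((γ - α * lam) • ulam)
        ≤ (1/2) * ‖K u - γ • K ulam‖ ^ 2 + α * J u := by
  intro u
  set c := γ - α * lam with hc_def
  set w := K ulam
  let ℓ : U →ₗ[ℝ] ℝ := lam • (innerₛₗ ℝ w).comp K.toLinearMap
  have hℓ : ∀ v, ℓ v = lam * ⟪w, K v⟫ := fun v => rfl
  have hsub : ∀ v, J ulam + ℓ (v - ulam) ≤ J v := fun v => by
    simpa only [hℓ, map_sub] using hsv v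
  have hJlam : J ulam = lam := by
    rw [eq_of_subgradient_of_homogeneous hhom hsub, hℓ, real_inner_self_eq_norm_sq, hnorm]
    ring
  have hlow : (γ - c) * ⟪w, K u⟫ ≤ α * J u := by
    rw [hc_def, sub_sub_cancel, mul_assoc, ← hℓ]
    exact mul_le_mul_of_nonneg_left (le_of_subgradient_of_homogeneous hhom hsub u) hα.le
  have hLHS : K (c • ulam) - γ • w = (c - γ) • w := by
    rw [map_smul]; exact (sub_smul c γ w).symm
  rw [hLHS, hhom c (by linarith), hJlam, norm_smul, hnorm, Real.norm_eq_abs, mul_one, sq_abs]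
  calc (1 / 2) * (c - γ) ^ 2 + α * (c * lam)
      = (1 / 2) * (γ ^ 2 - c ^ 2) := by rw [hc_def]; ring
    _ ≤ (1 / 2) * ‖K u - c • w‖ ^ 2 + (1 / 2) * (γ ^ 2 - c ^ 2) * ‖w‖ ^ 2 := by
      rw [hnorm, one_pow, mul_one]; exact le_add_of_nonneg_left (by positivity)
    _ = (1 / 2) * ‖K u - γ • w‖ ^ 2 + (γ - c) * ⟪w, K u⟫ :=
      (half_norm_sub_smul_sq_add_inner (K u) w γ c).symm
    _ ≤ (1 / 2) * ‖K u - γ • w‖ ^ 2 + α * J u := by gcongr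

/-- Exact reconstruction of singular vectors from clean data: if
`λ K*K u_λ ∈ ∂J(u_λ)`, `‖K u_λ‖ = 1`, and `f = γ K u_λ` with `γ > αλ > 0`,
then `û = (γ − αλ) u_λ` minimizes `u ↦ ½‖Ku − f‖² + αJ(u)`. -/
theorem singular_vector_exact_reconstruction_clean_data
    {U H : Type*} [NormedAddCommGroup U] [NormedSpace ℝ U]
    [NormedAddCommGroup H] [InnerProductSpace ℝ H]
    (K : U →L[ℝ] H) (J : U → ℝ) (hJnn : ∀ u, 0 ≤ J u)
    (hconv : ∀ (u v : U) (t : ℝ), 0 ≤ t → t ≤ 1 →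
      J (t • u + (1 - t) • v) ≤ t * J u + (1 - t) * J v)
    (hhom : ∀ (c : ℝ), 0 < c → ∀ u, J (c • u) = c * J u)
    (ulam : U) (lam : ℝ) (hlam : 0 < lam) (hnorm : ‖K ulam‖ = 1)
    (hsv : ∀ v : U, J ulam + lam * ⟪K ulam, K v - K ulam⟫ ≤ J v)
    (γ α : ℝ) (hα : 0 < α) (hγ : α * lam < γ) :
    ∀ u : U,
      (1/2) * ‖K ((γ - α * lam) • ulam) - γ • K ulam‖ ^ 2 + α * J ((γ - α * lam) • ulam)
        ≤ (1/2) * ‖K u - γ • K ulam‖ ^ 2 + α * J u :=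
  singular_vector_exact_reconstruction_clean_data_general K J hhom ulam lam hnorm hsv γ α hα hγ
end

section
/- Let J be convex, positively one-homogeneous and non-negative with smallest singular value λ₀ = inf{J(u) : ‖Ku‖_H = 1} (infimum over the normalized set, restricted appropriately so λ₀ > 0). Let f ∈ H, α > 0, and u^α minimize u ↦ (1/2)‖Ku − f‖²_H + αJ(u). Then ‖Ku^α‖_H ≤ max{‖f‖_H − αλ₀, 0}. Consequently, if ‖f‖_H ≥ αλ₀ then ‖Ku^α − f‖_H ≥ αλ₀. -/
/-!
Along the ray `t ↦ t • u^α` the objective is, by one-homogeneity of `J`, the real quadratic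
`½ (t² ‖K u^α‖² − 2t ⟪K u^α, f⟫ + ‖f‖²) + α t J(u^α)`, minimized at the interior point `t = 1`.
Its vanishing derivative is the Euler identity `‖K u^α‖² + α J(u^α) = ⟪K u^α, f⟫`.
The ground-state bound `λ₀ ‖K u^α‖ ≤ J(u^α)` and Cauchy–Schwarz then give
`‖K u^α‖ (α λ₀ + ‖K u^α‖) ≤ ‖K u^α‖ ‖f‖`, and the residual bound is the triangle inequality.
-/

open scoped RealInnerProductSpace

theorem quadratic_deriv_eq_zero_of_min_at_one {a b c : ℝ}
    (h : ∀ t : ℝ, 0 < t → a + b + c ≤ a * t ^ 2 + b * t + c) : 2 * a + b = 0 := by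
  have hmin : IsLocalMin (fun t : ℝ => a * t ^ 2 + b * t + c) 1 :=
    Filter.mem_of_superset (Ioi_mem_nhds one_pos) fun t ht => by simpa using h t ht
  have hderiv : HasDerivAt (fun t : ℝ => a * t ^ 2 + b * t + c) (2 * a + b) 1 := by
    refine ((((hasDerivAt_pow 2 (1 : ℝ)).const_mul a).add
      ((hasDerivAt_id' (1 : ℝ)).const_mul b)).add_const c).congr_deriv ?_
    norm_num
    ring
  exact hmin.hasDerivAt_eq_zero hderiv

section Minimizer

variable {U H : Type*} [NormedAddCommGroup U] [NormedSpace ℝ U]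
  [NormedAddCommGroup H] [InnerProductSpace ℝ H]
  {K : U →L[ℝ] H} {J : U → ℝ} {f : H} {α : ℝ} {u : U}

theorem objective_smul_eq_quadratic (hhom : ∀ c : ℝ, 0 < c → ∀ u, J (c • u) = c * J u)
    {t : ℝ} (ht : 0 < t) :
    (1/2) * ‖K (t • u) - f‖ ^ 2 + α * J (t • u)
      = (1/2) * ‖K u‖ ^ 2 * t ^ 2 + (α * J u - ⟪K u, f⟫) * t + (1/2) * ‖f‖ ^ 2 := by
  rw [map_smul, norm_sub_sq_real, norm_smul, real_inner_smul_left, hhom t ht,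
    Real.norm_eq_abs, abs_of_pos ht]
  ring

theorem norm_sq_add_mul_eq_inner_of_minimizer
    (hhom : ∀ c : ℝ, 0 < c → ∀ u, J (c • u) = c * J u)
    (hmin : ∀ v : U, (1/2) * ‖K u - f‖ ^ 2 + α * J u ≤ (1/2) * ‖K v - f‖ ^ 2 + α * J v) :
    ‖K u‖ ^ 2 + α * J u = ⟪K u, f⟫ := by
  have h := quadratic_deriv_eq_zero_of_min_at_one
    (a := (1/2) * ‖K u‖ ^ 2) (b := α * J u - ⟪K u, f⟫) (c := (1/2) * ‖f‖ ^ 2) fun t ht => by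
      have h1 := objective_smul_eq_quadratic (K := K) (f := f) (α := α) (u := u) hhom one_pos
      rw [one_smul, one_pow, mul_one, mul_one] at h1
      rw [← h1, ← objective_smul_eq_quadratic hhom ht]
      exact hmin (t • u)
  linarith

theorem mul_norm_le_of_ground_state (hhom : ∀ c : ℝ, 0 < c → ∀ u, J (c • u) = c * J u)
    {lam₀ : ℝ} (hground : ∀ v : U, ‖K v‖ = 1 → lam₀ ≤ J v) (hu : K u ≠ 0) :
    lam₀ * ‖K u‖ ≤ J u := by
  have hN : 0 < ‖K u‖ := norm_pos_iff.mpr hu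
  have hv : ‖K (‖K u‖⁻¹ • u)‖ = 1 := by
    rw [map_smul, norm_smul, norm_inv, norm_norm, inv_mul_cancel₀ hN.ne']
  have := hground _ hv
  rw [hhom _ (inv_pos.mpr hN)] at this
  rwa [le_inv_mul_iff₀' hN] at this

theorem add_norm_le_of_minimizer (hhom : ∀ c : ℝ, 0 < c → ∀ u, J (c • u) = c * J u)
    {lam₀ : ℝ} (hground : ∀ v : U, ‖K v‖ = 1 → lam₀ ≤ J v) (hα : 0 ≤ α)
    (hmin : ∀ v : U, (1/2) * ‖K u - f‖ ^ 2 + α * J u ≤ (1/2) * ‖K v - f‖ ^ 2 + α * J v)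
    (hu : K u ≠ 0) :
    α * lam₀ + ‖K u‖ ≤ ‖f‖ := by
  have hN : 0 < ‖K u‖ := norm_pos_iff.mpr hu
  have hJ := mul_le_mul_of_nonneg_left (mul_norm_le_of_ground_state hhom hground hu) hα
  refine le_of_mul_le_mul_left ?_ hN
  calc ‖K u‖ * (α * lam₀ + ‖K u‖) = α * (lam₀ * ‖K u‖) + ‖K u‖ ^ 2 := by ring
    _ ≤ ‖K u‖ ^ 2 + α * J u := by linarith
    _ = ⟪K u, f⟫ := norm_sq_add_mul_eq_inner_of_minimizer hhom hmin
    _ ≤ ‖K u‖ * ‖f‖ := real_inner_le_norm _ _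

end Minimizer

theorem bias_of_variational_methods_general
    {U H : Type*} [NormedAddCommGroup U] [NormedSpace ℝ U]
    [NormedAddCommGroup H] [InnerProductSpace ℝ H]
    (K : U →L[ℝ] H) (J : U → ℝ)
    (hhom : ∀ (c : ℝ), 0 < c → ∀ u, J (c • u) = c * J u)
    (lam₀ : ℝ)
    (hground : ∀ v : U, ‖K v‖ = 1 → lam₀ ≤ J v)
    (f : H) (α : ℝ) (hα : 0 < α) (uα : U)
    (hmin : ∀ u : U, (1/2) * ‖K uα - f‖ ^ 2 + α * J uα ≤ (1/2) * ‖K u - f‖ ^ 2 + α * J u) :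
    ‖K uα‖ ≤ max (‖f‖ - α * lam₀) 0 ∧
    (α * lam₀ ≤ ‖f‖ → α * lam₀ ≤ ‖K uα - f‖) := by
  have hbound : ‖K uα‖ ≤ max (‖f‖ - α * lam₀) 0 := by
    by_cases hu : K uα = 0
    · simp [hu]
    · exact le_max_of_le_left
        (by linarith [add_norm_le_of_minimizer hhom hground hα.le hmin hu])
  refine ⟨hbound, fun hf => ?_⟩
  rw [max_eq_left (sub_nonneg.mpr hf)] at hbound
  linarith [norm_sub_norm_le f (K uα), norm_sub_rev f (K uα)]

/-- Bias of variational methods: if `λ₀ > 0` is the smallest singular value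
(`J v ≥ λ₀` for all `v` with `‖Kv‖ = 1`) and `u^α` minimizes
`u ↦ ½‖Ku − f‖² + αJ(u)`, then `‖K u^α‖ ≤ max (‖f‖ − αλ₀) 0`; consequently, if
`‖f‖ ≥ αλ₀` then `‖K u^α − f‖ ≥ αλ₀`. -/
theorem bias_of_variational_methods
    {U H : Type*} [NormedAddCommGroup U] [NormedSpace ℝ U]
    [NormedAddCommGroup H] [InnerProductSpace ℝ H]
    (K : U →L[ℝ] H) (J : U → ℝ) (hJnn : ∀ u, 0 ≤ J u)
    (hconv : ∀ (u v : U) (t : ℝ), 0 ≤ t → t ≤ 1 →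
      J (t • u + (1 - t) • v) ≤ t * J u + (1 - t) * J v)
    (hhom : ∀ (c : ℝ), 0 < c → ∀ u, J (c • u) = c * J u)
    (lam₀ : ℝ) (hlam₀ : 0 < lam₀)
    (hground : ∀ v : U, ‖K v‖ = 1 → lam₀ ≤ J v)
    (f : H) (α : ℝ) (hα : 0 < α) (uα : U)
    (hmin : ∀ u : U, (1/2) * ‖K uα - f‖ ^ 2 + α * J uα ≤ (1/2) * ‖K u - f‖ ^ 2 + α * J u) :
    ‖K uα‖ ≤ max (‖f‖ - α * lam₀) 0 ∧
    (α * lam₀ ≤ ‖f‖ → α * lam₀ ≤ ‖K uα - f‖) :=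
  bias_of_variational_methods_general K J hhom lam₀ hground f α hα uα hmin
end

section
/- Under the assumptions of the bias theorem (J one-homogeneous, smallest singular value λ₀), let f = Kũ with J(ũ) < ∞ and ‖f‖_H ≥ αλ₀, α > 0, and let u^α minimize (1/2)‖Ku − f‖² + αJ(u). Then J(u^α) ≤ J(ũ) − (α/2)λ₀². -/
open scoped RealInnerProductSpace

set_option maxHeartbeats 800000

/-- Bias in the regularization functional: with `f = Kũ`, `‖f‖ ≥ αλ₀`, and
`u^α` a minimizer of `½‖Ku − f‖² + αJ(u)`, one has
`J(u^α) ≤ J(ũ) − (α/2)λ₀²`. -/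
theorem bias_in_regularization_functional
    {U H : Type*} [NormedAddCommGroup U] [NormedSpace ℝ U]
    [NormedAddCommGroup H] [InnerProductSpace ℝ H]
    (K : U →L[ℝ] H) (J : U → ℝ) (hJnn : ∀ u, 0 ≤ J u)
    (hconv : ∀ (u v : U) (t : ℝ), 0 ≤ t → t ≤ 1 →
      J (t • u + (1 - t) • v) ≤ t * J u + (1 - t) * J v)
    (hhom : ∀ (c : ℝ), 0 < c → ∀ u, J (c • u) = c * J u)
    (lam₀ : ℝ) (hlam₀ : 0 < lam₀)
    (hground : ∀ v : U, ‖K v‖ = 1 → lam₀ ≤ J v)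
    (ut : U) (α : ℝ) (hα : 0 < α) (hf : α * lam₀ ≤ ‖K ut‖) (uα : U)
    (hmin : ∀ u : U,
      (1/2) * ‖K uα - K ut‖ ^ 2 + α * J uα ≤ (1/2) * ‖K u - K ut‖ ^ 2 + α * J u) :
    J uα ≤ J ut - (α / 2) * lam₀ ^ 2 := by
  set r : ℝ := ‖K uα - K ut‖ with hr
  have hrnn : 0 ≤ r := norm_nonneg _
  -- ground state inequality: λ₀ ‖K u‖ ≤ J u
  have hJK : ∀ u : U, lam₀ * ‖K u‖ ≤ J u := by
    intro u
    by_cases h0 : K u = 0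
    · simp [h0, hJnn u]
    · have hn : (0:ℝ) < ‖K u‖ := norm_pos_iff.mpr h0
      have hv : ‖K ((‖K u‖)⁻¹ • u)‖ = 1 := by
        rw [map_smul, norm_smul, norm_inv, norm_norm]
        field_simp
      have := hground _ hv
      rw [hhom _ (inv_pos.mpr hn) u] at this
      calc lam₀ * ‖K u‖ ≤ ((‖K u‖)⁻¹ * J u) * ‖K u‖ := by nlinarith
        _ = J u := by field_simp
  -- residual bound : α λ₀ ≤ r
  have hres : α * lam₀ ≤ r := by
    by_cases hK0 : K uα = 0
    · have : r = ‖K ut‖ := by rw [hr, hK0, zero_sub, norm_neg]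
      linarith [this ▸ hf]
    · have ha : (0:ℝ) < ‖K uα‖ := norm_pos_iff.mpr hK0
      set a : ℝ := ‖K uα‖ ^ 2 with hadef
      have hapos : 0 < a := by positivity
      set b : ℝ := ⟪K uα, K ut⟫ with hbdef
      have hexp : ∀ c : ℝ, ‖c • K uα - K ut‖ ^ 2 = c ^ 2 * a - 2 * c * b + ‖K ut‖ ^ 2 := by
        intro c
        rw [@norm_sub_sq_real, norm_smul, real_inner_smul_left]
        simp [hadef, hbdef, abs_of_nonneg, mul_pow]
        ring
      have hr2 : r ^ 2 = a - 2 * b + ‖K ut‖ ^ 2 := by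
        have := hexp 1
        simpa using this
      -- compare with (1/2) • uα to get β > 0
      set β : ℝ := b - α * J uα with hβdef
      have hβpos : 0 < β := by
        have h1 := hmin ((1/2 : ℝ) • uα)
        rw [map_smul] at h1
        rw [show (((1:ℝ)/2) • uα : U) = ((1:ℝ)/2) • uα from rfl] at h1
        have hJh := hhom (1/2) (by norm_num) uα
        rw [hJh] at h1
        rw [hexp (1/2)] at h1
        have hc : (((1:ℝ)/2) • K uα : H) = ((1:ℝ)/2 : ℝ) • K uα := rfl
        nlinarith [h1, hr2]
      -- compare with (β/a) • uα : get α J uα ≤ b - a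
      have hkey : α * J uα ≤ b - a := by
        have hcpos : 0 < β / a := div_pos hβpos hapos
        have h2 := hmin ((β / a : ℝ) • uα)
        rw [map_smul, hhom _ hcpos uα, hexp (β/a)] at h2
        rw [hr2] at h2
        have hane : a ≠ 0 := ne_of_gt hapos
        set q : ℝ := β / a with hqdef
        have hq : q * a = β := div_mul_cancel₀ _ hane
        have h2a := mul_le_mul_of_nonneg_right h2 hapos.le
        have e1 : q ^ 2 * a * a = β ^ 2 := by
          rw [hqdef]; field_simp
        have e2 : q * b * a = β * b := by rw [mul_right_comm, hq]
        have e3 : α * (q * J uα) * a = β * (α * J uα) := by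
          rw [show α * (q * J uα) * a = (q * a) * (α * J uα) by ring, hq]
        have e4 : a * β = a * b - a * (α * J uα) := by rw [hβdef]; ring
        have e5 : β * β = β * b - β * (α * J uα) := by
          nth_rewrite 2 [hβdef]; ring
        have key : a ^ 2 - 2 * (a * β) + β ^ 2 ≤ 0 := by linarith [h2a, e1, e2, e3, e4, e5]
        have h0 : (a - β) ^ 2 = 0 := le_antisymm (by nlinarith [key]) (sq_nonneg _)
        have h0' : a - β = 0 := by
          have := sq_eq_zero_iff.mp h0
          exact this
        rw [hβdef] at h0'
        linarith
      -- Cauchy–Schwarz : b - a ≤ ‖K uα‖ * r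
      have hcs : b - a ≤ ‖K uα‖ * r := by
        have h4 : ⟪K uα, K ut - K uα⟫ ≤ ‖K uα‖ * ‖K ut - K uα‖ := real_inner_le_norm _ _
        have h5 : ⟪K uα, K ut - K uα⟫ = b - a := by
          rw [inner_sub_right, real_inner_self_eq_norm_sq]
        have h6 : ‖K ut - K uα‖ = r := by rw [hr, ← norm_neg]; congr 1; abel
        rw [h5, h6] at h4; exact h4
      have h7 : α * (lam₀ * ‖K uα‖) ≤ ‖K uα‖ * r := by
        calc α * (lam₀ * ‖K uα‖) ≤ α * J uα := by nlinarith [hJK uα]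
          _ ≤ b - a := hkey
          _ ≤ ‖K uα‖ * r := hcs
      nlinarith [h7, ha]
  -- conclude using hmin at ut
  have h8 := hmin ut
  simp only [sub_self, norm_zero] at h8
  nlinarith [h8, hres, hrnn, hα, mul_pos hα hlam₀,
    mul_le_mul hres hres (mul_pos hα hlam₀).le hrnn]
end

section
/- Let J be convex, positively one-homogeneous with J(0) = 0, and u_λ a singular vector with singular value λ > 0 (λK*Ku_λ ∈ ∂J(u_λ), ‖Ku_λ‖=1). For data f = γKu_λ with γ > 0, a solution of the inverse scale space flow ∂_t p(t) = K*(f − Ku(t)), p(t) ∈ ∂J(u(t)), p(0) = 0, is given by u(t) = 0 for t < t* and u(t) = γ u_λ for t ≥ t*, with p(t) = min(t, t*)·γK*Ku_λ, where t* = λ/γ. -/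
open scoped RealInnerProductSpace

/-- Unbiased recovery by the inverse scale space flow, clean data: for
`f = γ K u_λ` with `γ > 0` and singular vector `u_λ` (singular value `λ > 0`),
the pair `u(t) = 0` for `t < t*`, `u(t) = γ u_λ` for `t ≥ t*`, together with
the dual variable `p(t) = min(t, t*) γ K*K u_λ` (represented by
`P(t) = (min t t*) γ • K u_λ` in `H`), solves the inverse scale space flow
`∂ₜ p = K*(f − K u)`, `p(t) ∈ ∂J(u(t))`, `p(0) = 0`, where `t* = λ/γ`. -/
theorem inverse_scale_space_clean_data
    {U H : Type*} [NormedAddCommGroup U] [NormedSpace ℝ U]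
    [NormedAddCommGroup H] [InnerProductSpace ℝ H]
    (K : U →L[ℝ] H) (J : U → ℝ) (hJ0 : J 0 = 0) (hJnn : ∀ u, 0 ≤ J u)
    (hconv : ∀ (u v : U) (t : ℝ), 0 ≤ t → t ≤ 1 →
      J (t • u + (1 - t) • v) ≤ t * J u + (1 - t) * J v)
    (hhom : ∀ (c : ℝ), 0 < c → ∀ u, J (c • u) = c * J u)
    (ulam : U) (lam γ : ℝ) (hlam : 0 < lam) (hγ : 0 < γ) (hnorm : ‖K ulam‖ = 1)
    (hsv : ∀ v : U, J ulam + lam * ⟪K ulam, K v - K ulam⟫ ≤ J v) :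
    let tstar : ℝ := lam / γ
    let u : ℝ → U := fun t => if t < tstar then 0 else γ • ulam
    let P : ℝ → H := fun t => (min t tstar * γ) • K ulam
    P 0 = 0 ∧
    (∀ t : ℝ, 0 ≤ t → ∀ v : U, J (u t) + ⟪P t, K v - K (u t)⟫ ≤ J v) ∧
    (∀ t : ℝ, 0 ≤ t → t ≠ tstar → ∀ v : U,
      HasDerivAt (fun s : ℝ => (⟪P s, K v⟫ : ℝ)) ⟪γ • K ulam - K (u t), K v⟫ t) := by
  intro tstar u P
  have htstar : 0 < tstar := div_pos hlam hγ
  have hself : ⟪K ulam, K ulam⟫ = 1 := by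
    have h := real_inner_self_eq_norm_sq (K ulam)
    rw [hnorm] at h; simpa using h
  have hJu_le : J ulam ≤ lam := by
    have h := hsv 0
    simp only [map_zero, zero_sub, inner_neg_right, hself, hJ0] at h
    linarith
  have hJu_ge : lam ≤ J ulam := by
    have h := hsv ((2:ℝ) • ulam)
    rw [hhom 2 (by norm_num), map_smul] at h
    simp only [inner_sub_right, real_inner_smul_right, hself] at h
    linarith
  have hJu : J ulam = lam := le_antisymm hJu_le hJu_ge
  have hkey : ∀ v, lam * ⟪K ulam, K v⟫ ≤ J v := by
    intro v
    by_contra hc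
    push_neg at hc
    set A := lam * ⟪K ulam, K v⟫ - J v with hA
    have hApos : 0 < A := by simp only [hA]; linarith
    set c := (lam - J ulam + 1) / A with hcdef
    have hcpos : 0 < c := div_pos (by linarith) hApos
    have h := hsv (c • v)
    rw [hhom c hcpos, map_smul] at h
    simp only [inner_sub_right, real_inner_smul_right, hself] at h
    have hcA : c * A = lam - J ulam + 1 := by
      rw [hcdef]; field_simp
    nlinarith
  refine ⟨?_, ?_, ?_⟩
  · simp [P, min_eq_left htstar.le]
  · intro t ht v
    by_cases h : t < tstar
    · simp only [u, P, if_pos h, min_eq_left h.le, map_zero, sub_zero, hJ0, zero_add,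
        real_inner_smul_left]
      have htγ : t * γ ≤ lam := by
        rw [lt_div_iff₀ hγ] at h; linarith
      have hk := hkey v
      rcases le_or_gt 0 (⟪K ulam, K v⟫ : ℝ) with hi | hi
      · nlinarith
      · nlinarith [hJnn v, mul_nonneg ht hγ.le]
    · have hmin : min t tstar = tstar := min_eq_right (not_lt.1 h)
      have htγ : tstar * γ = lam := div_mul_cancel₀ lam hγ.ne'
      simp only [u, P, if_neg h, hmin, htγ, map_smul, real_inner_smul_left,
        inner_sub_right, real_inner_smul_right, hself, hhom γ hγ, hJu]
      have hk := hkey v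
      ring_nf
      nlinarith [hkey v]
  · intro t ht htne v
    rcases lt_or_gt_of_ne htne with h | h
    · have hut : u t = 0 := if_pos h
      have hder : (⟪γ • K ulam - K (u t), K v⟫ : ℝ) = γ * ⟪K ulam, K v⟫ := by
        rw [hut, map_zero, sub_zero, real_inner_smul_left]
      rw [hder]
      have hd : HasDerivAt (fun s : ℝ => s * (γ * ⟪K ulam, K v⟫))
          (γ * ⟪K ulam, K v⟫) t := by
        simpa using (hasDerivAt_id t).mul_const (γ * ⟪K ulam, K v⟫)
      have hEq : (fun s : ℝ => (⟪P s, K v⟫ : ℝ)) =ᶠ[nhds t]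
          (fun s : ℝ => s * (γ * ⟪K ulam, K v⟫)) := by
        filter_upwards [Iio_mem_nhds h] with s hs
        have hmin : min s tstar = s := min_eq_left (Set.mem_Iio.mp hs).le
        show (⟪(min s tstar * γ) • K ulam, K v⟫ : ℝ) = s * (γ * ⟪K ulam, K v⟫)
        rw [hmin, real_inner_smul_left]; ring
      exact hd.congr_of_eventuallyEq hEq
    · have hut : u t = γ • ulam := if_neg (not_lt.2 h.le)
      have hder : (⟪γ • K ulam - K (u t), K v⟫ : ℝ) = 0 := by
        rw [hut, map_smul, sub_self, inner_zero_left]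
      rw [hder]
      have hd : HasDerivAt (fun _ : ℝ => (tstar * γ) * ⟪K ulam, K v⟫) 0 t :=
        hasDerivAt_const t _
      have hEq : (fun s : ℝ => (⟪P s, K v⟫ : ℝ)) =ᶠ[nhds t]
          (fun _ : ℝ => (tstar * γ) * ⟪K ulam, K v⟫) := by
        filter_upwards [Ioi_mem_nhds h] with s hs
        have hmin : min s tstar = tstar := min_eq_right (Set.mem_Ioi.mp hs).le
        show (⟪(min s tstar * γ) • K ulam, K v⟫ : ℝ) = (tstar * γ) * ⟪K ulam, K v⟫
        rw [hmin, real_inner_smul_left]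
      exact hd.congr_of_eventuallyEq hEq
end

section
/- Let J be convex, positively one-homogeneous, u_λ a singular vector with singular value λ, and f = γKu_λ + n with constants μ, η > 0 satisfying μK*Ku_λ + ηK*n ∈ ∂J(u_λ) and γ > μ/η. Then a solution of the inverse scale space flow ∂_t p = K*(f − Ku), p(t) ∈ ∂J(u(t)), p(0)=0, is u(t) = 0 for t < t* and u(t) = c·u_λ for t* ≤ t < t**, where c = γ + (λ−μ)/η, t* = λη/(λ + γη − μ), and t** = η; in particular t* < t**. -/
open scoped RealInnerProductSpace

/-!
Both `λ K u_λ` and `μ K u_λ + η n` represent subgradients of `J` at `u_λ`, hence so does every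
convex combination of them. After `t*` the dual variable is exactly the combination with weight
`t / η` on the second one, which explains `t** = η`; by one-homogeneity it is then also a
subgradient at `c u_λ`. Before `t*` the dual variable `t f` is `t / t*` times its value at `t*`,
and shrinking a subgradient towards `0` gives a subgradient at `0` of a nonnegative `J`.
-/

section Subgradient

variable {U H : Type*} [AddCommGroup U] [Module ℝ U] [NormedAddCommGroup H]
  [InnerProductSpace ℝ H] {K : U →ₗ[ℝ] H} {J : U → ℝ}

/-- `p ∈ H` stands for the subgradient `K* p ∈ ∂J(u)`. -/
def IsKSubgradient (K : U →ₗ[ℝ] H) (J : U → ℝ) (u : U) (p : H) : Prop :=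
  ∀ v, J u + ⟪p, K v - K u⟫ ≤ J v

theorem IsKSubgradient.convex_comb {u : U} {p q : H} {β : ℝ} (hp : IsKSubgradient K J u p)
    (hq : IsKSubgradient K J u q) (hβ₀ : 0 ≤ β) (hβ₁ : β ≤ 1) :
    IsKSubgradient K J u ((1 - β) • p + β • q) := by
  intro v
  have hp' := mul_le_mul_of_nonneg_left (hp v) (sub_nonneg.mpr hβ₁)
  have hq' := mul_le_mul_of_nonneg_left (hq v) hβ₀
  rw [inner_add_left, real_inner_smul_left, real_inner_smul_left]
  linarith

theorem map_zero_of_homogeneous (hhom : ∀ c : ℝ, 0 < c → ∀ u, J (c • u) = c * J u) :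
    J 0 = 0 := by
  have h := hhom 2 two_pos 0
  rw [smul_zero] at h
  linarith

theorem isKSubgradient_iff_of_homogeneous (hhom : ∀ c : ℝ, 0 < c → ∀ u, J (c • u) = c * J u)
    {u : U} {p : H} :
    IsKSubgradient K J u p ↔ ⟪p, K u⟫ = J u ∧ ∀ v, ⟪p, K v⟫ ≤ J v := by
  constructor
  · intro hp
    -- test the subgradient inequality along the ray through `u`
    have h₂ := hp ((2 : ℝ) • u)
    have h₁ := hp ((1 / 2 : ℝ) • u)
    rw [hhom 2 two_pos, map_smul, inner_sub_right, real_inner_smul_right] at h₂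
    rw [hhom _ one_half_pos, map_smul, inner_sub_right, real_inner_smul_right] at h₁
    have hu : ⟪p, K u⟫ = J u := by linarith
    refine ⟨hu, fun v => ?_⟩
    have := hp v
    rw [inner_sub_right, hu] at this
    linarith
  · rintro ⟨hu, hv⟩ v
    rw [inner_sub_right, hu]
    linarith [hv v]

theorem IsKSubgradient.smul_of_pos (hhom : ∀ c : ℝ, 0 < c → ∀ u, J (c • u) = c * J u)
    {u : U} {p : H} {c : ℝ} (hc : 0 < c) (hp : IsKSubgradient K J u p) :
    IsKSubgradient K J (c • u) p := by
  rw [isKSubgradient_iff_of_homogeneous hhom] at hp ⊢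
  refine ⟨?_, hp.2⟩
  rw [map_smul, real_inner_smul_right, hp.1, hhom c hc]

theorem IsKSubgradient.smul_at_zero (hhom : ∀ c : ℝ, 0 < c → ∀ u, J (c • u) = c * J u)
    (hJnn : ∀ u, 0 ≤ J u) {u : U} {p : H} {r : ℝ} (hr₀ : 0 ≤ r) (hr₁ : r ≤ 1)
    (hp : IsKSubgradient K J u p) :
    IsKSubgradient K J 0 (r • p) := by
  rw [isKSubgradient_iff_of_homogeneous hhom] at hp ⊢
  refine ⟨by rw [map_zero, inner_zero_right, map_zero_of_homogeneous hhom], fun v => ?_⟩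
  rw [real_inner_smul_left]
  nlinarith [hp.2 v, hJnn v]

end Subgradient

theorem hasDerivAt_ite_lt {E : Type*} [NormedAddCommGroup E] [NormedSpace ℝ E]
    {F G : ℝ → E} {F' G' : E} {a t : ℝ} (hF : HasDerivAt F F' t) (hG : HasDerivAt G G' t)
    (ht : t ≠ a) :
    HasDerivAt (fun s => if s < a then F s else G s) (if t < a then F' else G') t := by
  rcases ht.lt_or_gt with hlt | hgt
  · rw [if_pos hlt]
    refine hF.congr_of_eventuallyEq ?_
    filter_upwards [Iio_mem_nhds hlt] with s hs
    exact if_pos hs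
  · rw [if_neg hgt.not_gt]
    refine hG.congr_of_eventuallyEq ?_
    filter_upwards [Ioi_mem_nhds hgt] with s hs
    exact if_neg (not_lt.mpr hs.le)

theorem hasDerivAt_noisy_dual_path {E : Type*} [NormedAddCommGroup E] [NormedSpace ℝ E]
    {w n : E} {γ c a t : ℝ} (ht : t ≠ a) :
    HasDerivAt (fun s => if s < a then s • (γ • w + n) else s • n + (γ * s - c * (s - a)) • w)
      (γ • w + n - if t < a then 0 else c • w) t := by
  convert hasDerivAt_ite_lt (((hasDerivAt_id' t).smul_const (γ • w + n)).congr_deriv (one_smul ℝ _))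
    (((hasDerivAt_id' t).smul_const n).fun_add ((((hasDerivAt_id' t).const_mul γ).fun_sub
      (((hasDerivAt_id' t).sub_const a).const_mul c)).smul_const w)) ht using 1
  split_ifs
  · rw [sub_zero]
  · module

theorem noisy_dual_eq_convex_comb {E : Type*} [AddCommGroup E] [Module ℝ E] {w n : E}
    {lam γ μ η c a t : ℝ} (hη : η ≠ 0) (hc : c = γ + (lam - μ) / η) (hca : c * a = lam) :
    t • n + (γ * t - c * (t - a)) • w = (1 - t / η) • (lam • w) + (t / η) • (μ • w + η • n) := by
  match_scalars
  · field_simp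
  · linear_combination hca - t * hc

theorem inverse_scale_space_times {lam γ μ η : ℝ} (hlam : 0 < lam) (hη : 0 < η)
    (hsnr : μ / η < γ) :
    0 < lam * η / (lam + γ * η - μ) ∧ lam * η / (lam + γ * η - μ) < η ∧
      (γ + (lam - μ) / η) * (lam * η / (lam + γ * η - μ)) = lam := by
  have hden : 0 < lam + γ * η - μ := by
    have := (div_lt_iff₀ hη).mp hsnr
    linarith
  refine ⟨by positivity, ?_, ?_⟩
  · rw [div_lt_iff₀ hden]
    nlinarith [(div_lt_iff₀ hη).mp hsnr]
  · field_simp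
    ring

theorem inverse_scale_space_noisy_data_general
    {U H : Type*} [NormedAddCommGroup U] [NormedSpace ℝ U]
    [NormedAddCommGroup H] [InnerProductSpace ℝ H]
    (K : U →L[ℝ] H) (J : U → ℝ) (hJnn : ∀ u, 0 ≤ J u)
    (hhom : ∀ (c : ℝ), 0 < c → ∀ u, J (c • u) = c * J u)
    (ulam : U) (lam : ℝ) (hlam : 0 < lam)
    (hsv : ∀ v : U, J ulam + lam * ⟪K ulam, K v - K ulam⟫ ≤ J v)
    (n : H) (γ μ η : ℝ) (hη : 0 < η)
    (hmem : ∀ v : U, J ulam + ⟪μ • K ulam + η • n, K v - K ulam⟫ ≤ J v)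
    (hsnr : μ / η < γ) :
    let c : ℝ := γ + (lam - μ) / η
    let tstar : ℝ := lam * η / (lam + γ * η - μ)
    let tstar2 : ℝ := η
    let f : H := γ • K ulam + n
    let u : ℝ → U := fun t => if t < tstar then 0 else c • ulam
    let P : ℝ → H := fun t =>
      if t < tstar then t • f else t • n + (γ * t - c * (t - tstar)) • K ulam
    tstar < tstar2 ∧
    P 0 = 0 ∧
    (∀ t : ℝ, 0 ≤ t → t < tstar2 → ∀ v : U, J (u t) + ⟪P t, K v - K (u t)⟫ ≤ J v) ∧
    (∀ t : ℝ, 0 ≤ t → t < tstar2 → t ≠ tstar → ∀ v : U,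
      HasDerivAt (fun s : ℝ => (⟪P s, K v⟫ : ℝ)) ⟪f - K (u t), K v⟫ t) := by
  intro c tstar tstar2 f u P
  obtain ⟨hts_pos, hts_lt, hc_tstar⟩ : 0 < tstar ∧ tstar < η ∧ c * tstar = lam :=
    inverse_scale_space_times hlam hη hsnr
  have hc : 0 < c := pos_of_mul_pos_left (hc_tstar.symm ▸ hlam) hts_pos.le
  have hc_def : c = γ + (lam - μ) / η := rfl
  clear_value c tstar
  have hsub_lam : IsKSubgradient (K : U →ₗ[ℝ] H) J ulam (lam • K ulam) := fun v => by
    simpa only [real_inner_smul_left, ContinuousLinearMap.coe_coe] using hsv v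
  have hsub_after : ∀ t, 0 ≤ t → t ≤ η →
      IsKSubgradient (K : U →ₗ[ℝ] H) J ulam (t • n + (γ * t - c * (t - tstar)) • K ulam) := by
    intro t ht₀ ht₁
    rw [noisy_dual_eq_convex_comb hη.ne' hc_def hc_tstar]
    exact hsub_lam.convex_comb hmem (div_nonneg ht₀ hη.le) ((div_le_one hη).mpr ht₁)
  refine ⟨hts_lt, by simp only [P, if_pos hts_pos, zero_smul],
    fun t ht₀ ht₁ => (?_ : IsKSubgradient (K : U →ₗ[ℝ] H) J (u t) (P t)), fun t _ _ hne v => ?_⟩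
  · by_cases htt : t < tstar
    · simp only [u, P, if_pos htt]
      convert (hsub_after tstar hts_pos.le hts_lt.le).smul_at_zero hhom hJnn
        (div_nonneg ht₀ hts_pos.le) ((div_le_one hts_pos).mpr htt.le) using 1
      simp only [f, sub_self, mul_zero, sub_zero, smul_add, smul_smul]
      field_simp
      module
    · simp only [u, P, if_neg htt]
      exact (hsub_after t ht₀ ht₁.le).smul_of_pos hhom hc
  · have hKu : K (u t) = if t < tstar then 0 else c • K ulam := by
      simp only [u, apply_ite K, map_zero, map_smul]
    rw [hKu]
    have hP : HasDerivAt P (f - if t < tstar then 0 else c • K ulam) t :=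
      hasDerivAt_noisy_dual_path hne
    simpa using hP.inner ℝ (hasDerivAt_const t (K v))

/-- Unbiased recovery by the inverse scale space flow, noisy data: for
`f = γ K u_λ + n` with `μ K*K u_λ + η K*n ∈ ∂J(u_λ)` and `γ > μ/η`, the pair
`u(t) = 0` for `t < t*`, `u(t) = c u_λ` for `t* ≤ t < t**` with
`c = γ + (λ−μ)/η`, `t* = λη/(λ + γη − μ)`, `t** = η`, together with the dual
variable `p(t)` (represented in `H` by `P(t) = t • f` for `t < t*` and
`P(t) = t • n + (γt − c(t − t*)) • K u_λ` for `t ≥ t*`), solves the inverse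
scale space flow `∂ₜ p = K*(f − Ku)`, `p(t) ∈ ∂J(u(t))`, `p(0) = 0`;
in particular `t* < t**`. -/
theorem inverse_scale_space_noisy_data
    {U H : Type*} [NormedAddCommGroup U] [NormedSpace ℝ U]
    [NormedAddCommGroup H] [InnerProductSpace ℝ H]
    (K : U →L[ℝ] H) (J : U → ℝ) (hJ0 : J 0 = 0) (hJnn : ∀ u, 0 ≤ J u)
    (hconv : ∀ (u v : U) (t : ℝ), 0 ≤ t → t ≤ 1 →
      J (t • u + (1 - t) • v) ≤ t * J u + (1 - t) * J v)
    (hhom : ∀ (c : ℝ), 0 < c → ∀ u, J (c • u) = c * J u)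
    (ulam : U) (lam : ℝ) (hlam : 0 < lam) (hnorm : ‖K ulam‖ = 1)
    (hsv : ∀ v : U, J ulam + lam * ⟪K ulam, K v - K ulam⟫ ≤ J v)
    (n : H) (γ μ η : ℝ) (hγ : 0 < γ) (hμ : 0 < μ) (hη : 0 < η)
    (hmem : ∀ v : U, J ulam + ⟪μ • K ulam + η • n, K v - K ulam⟫ ≤ J v)
    (hsnr : μ / η < γ) :
    let c : ℝ := γ + (lam - μ) / η
    let tstar : ℝ := lam * η / (lam + γ * η - μ)
    let tstar2 : ℝ := η
    let f : H := γ • K ulam + n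
    let u : ℝ → U := fun t => if t < tstar then 0 else c • ulam
    let P : ℝ → H := fun t =>
      if t < tstar then t • f else t • n + (γ * t - c * (t - tstar)) • K ulam
    tstar < tstar2 ∧
    P 0 = 0 ∧
    (∀ t : ℝ, 0 ≤ t → t < tstar2 → ∀ v : U, J (u t) + ⟪P t, K v - K (u t)⟫ ≤ J v) ∧
    (∀ t : ℝ, 0 ≤ t → t < tstar2 → t ≠ tstar → ∀ v : U,
      HasDerivAt (fun s : ℝ => (⟪P s, K v⟫ : ℝ)) ⟪f - K (u t), K v⟫ t) :=
  inverse_scale_space_noisy_data_general K J hJnn hhom ulam lam hlam hsv n γ μ η hη hmem hsnr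
end

section
/- Let K : M(Ω) → H be a bounded linear operator from Radon measures on a compact set Ω to a Hilbert space H, such that y ↦ ‖Kδ_y‖_H is continuous, and suppose z ∈ Ω maximizes f(y) := ‖Kδ_y‖_H with f(z) > 0. Then μ₀ = c·δ_z with c = 1/‖Kδ_z‖_H satisfies: for all μ ∈ M(Ω), ‖Kμ‖_H ≤ J(μ)·‖Kδ_z‖_H, with equality for μ = μ₀; i.e., μ₀ is a ground state of J(μ) = |μ|(Ω) (the total variation norm) subject to ‖Kμ‖_H = 1, and the smallest singular value is λ₀ = c. -/
/-!
Testing `Kμ` against itself and using that `K` is represented through the Dirac measures,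
`‖Kμ‖² = ⟪Kμ, Kμ⟫ = ∫ ⟪Kμ, Kδ_y⟫ dμ(y) ≤ |μ|(Ω) · ‖Kμ‖ · sup_y ‖Kδ_y‖`, so
`‖Kμ‖ ≤ |μ|(Ω) ‖Kδ_z‖`. The rescaled Dirac measure `μ₀ = δ_z / ‖Kδ_z‖` has
`|μ₀|(Ω) = 1 / ‖Kδ_z‖` and `‖Kμ₀‖ = 1`, so it attains the bound.
-/

open MeasureTheory
open scoped RealInnerProductSpace

namespace MeasureTheory

variable {α : Type*} [MeasurableSpace α]

theorem Measure.toJordanDecomposition_toSignedMeasure (ν : Measure α) [IsFiniteMeasure ν] :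
    ν.toSignedMeasure.toJordanDecomposition = ⟨ν, 0, Measure.MutuallySingular.zero_right⟩ := by
  apply SignedMeasure.toJordanDecomposition_eq
  change ν.toSignedMeasure = ν.toSignedMeasure - (0 : Measure α).toSignedMeasure
  rw [Measure.toSignedMeasure_zero, sub_zero]

namespace SignedMeasure

theorem totalVariation_smul_toSignedMeasure {c : ℝ} (hc : 0 ≤ c) (ν : Measure α)
    [IsFiniteMeasure ν] : (c • ν.toSignedMeasure).totalVariation = c.toNNReal • ν := by
  rw [totalVariation, toJordanDecomposition_smul_real,
    Measure.toJordanDecomposition_toSignedMeasure,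
    JordanDecomposition.real_smul_posPart_nonneg _ _ hc,
    JordanDecomposition.real_smul_negPart_nonneg _ _ hc, smul_zero, add_zero]

theorem totalVariation_univ_toReal (s : SignedMeasure α) :
    (s.totalVariation Set.univ).toReal =
      (s.toJordanDecomposition.posPart Set.univ).toReal +
        (s.toJordanDecomposition.negPart Set.univ).toReal := by
  rw [totalVariation, Measure.add_apply,
    ENNReal.toReal_add (measure_ne_top _ _) (measure_ne_top _ _)]

theorem abs_integral_posPart_sub_integral_negPart_le (s : SignedMeasure α) {g : α → ℝ}
    {B : ℝ} (hg : ∀ y, |g y| ≤ B) :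
    |(∫ y, g y ∂s.toJordanDecomposition.posPart) - ∫ y, g y ∂s.toJordanDecomposition.negPart|
      ≤ (s.totalVariation Set.univ).toReal * B := by
  have hg' : ∀ y, ‖g y‖ ≤ B := fun y => (Real.norm_eq_abs _).trans_le (hg y)
  have hpos := norm_integral_le_of_norm_le_const (μ := s.toJordanDecomposition.posPart)
    (Filter.Eventually.of_forall hg')
  have hneg := norm_integral_le_of_norm_le_const (μ := s.toJordanDecomposition.negPart)
    (Filter.Eventually.of_forall hg')
  rw [totalVariation_univ_toReal]
  calc _ ≤ ‖∫ y, g y ∂s.toJordanDecomposition.posPart‖ +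
        ‖∫ y, g y ∂s.toJordanDecomposition.negPart‖ := abs_sub _ _
    _ ≤ _ := by rw [measureReal_def] at hpos hneg; linarith

end SignedMeasure

end MeasureTheory

section DiracRepresentation

variable {Ω : Type*} [MeasurableSpace Ω] {H : Type*} [NormedAddCommGroup H]
  [InnerProductSpace ℝ H] {K : SignedMeasure Ω →ₗ[ℝ] H}

theorem abs_inner_le_totalVariation_mul_norm_dirac
    (hrep : ∀ (μ : SignedMeasure Ω) (w : H),
      ⟪w, K μ⟫ =
        (∫ y, (⟪w, K (Measure.dirac y).toSignedMeasure⟫ : ℝ)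
            ∂μ.toJordanDecomposition.posPart) -
        (∫ y, (⟪w, K (Measure.dirac y).toSignedMeasure⟫ : ℝ)
            ∂μ.toJordanDecomposition.negPart))
    {z : Ω} (hz : ∀ y : Ω, ‖K (Measure.dirac y).toSignedMeasure‖ ≤
      ‖K (Measure.dirac z).toSignedMeasure‖)
    (μ : SignedMeasure Ω) (w : H) :
    |⟪w, K μ⟫| ≤
      (μ.totalVariation Set.univ).toReal * (‖w‖ * ‖K (Measure.dirac z).toSignedMeasure‖) := by
  rw [hrep]
  refine μ.abs_integral_posPart_sub_integral_negPart_le fun y => ?_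
  exact (abs_real_inner_le_norm _ _).trans (mul_le_mul_of_nonneg_left (hz y) (norm_nonneg w))

theorem norm_le_totalVariation_mul_norm_dirac
    (hrep : ∀ (μ : SignedMeasure Ω) (w : H),
      ⟪w, K μ⟫ =
        (∫ y, (⟪w, K (Measure.dirac y).toSignedMeasure⟫ : ℝ)
            ∂μ.toJordanDecomposition.posPart) -
        (∫ y, (⟪w, K (Measure.dirac y).toSignedMeasure⟫ : ℝ)
            ∂μ.toJordanDecomposition.negPart))
    {z : Ω} (hz : ∀ y : Ω, ‖K (Measure.dirac y).toSignedMeasure‖ ≤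
      ‖K (Measure.dirac z).toSignedMeasure‖)
    (μ : SignedMeasure Ω) :
    ‖K μ‖ ≤ (μ.totalVariation Set.univ).toReal * ‖K (Measure.dirac z).toSignedMeasure‖ := by
  have hsq : ‖K μ‖ ^ 2 ≤
      ‖K μ‖ * ((μ.totalVariation Set.univ).toReal * ‖K (Measure.dirac z).toSignedMeasure‖) := by
    rw [← real_inner_self_eq_norm_sq, mul_left_comm]
    exact (le_abs_self _).trans (abs_inner_le_totalVariation_mul_norm_dirac hrep hz μ (K μ))
  have hbound_nonneg : 0 ≤ (μ.totalVariation Set.univ).toReal *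
      ‖K (Measure.dirac z).toSignedMeasure‖ := by positivity
  nlinarith [norm_nonneg (K μ)]

end DiracRepresentation

theorem support_pursuit_ground_state_general
    {Ω : Type*} [MeasurableSpace Ω]
    {H : Type*} [NormedAddCommGroup H] [InnerProductSpace ℝ H]
    (K : SignedMeasure Ω →ₗ[ℝ] H)
    (hrep : ∀ (μ : SignedMeasure Ω) (w : H),
      ⟪w, K μ⟫ =
        (∫ y, (⟪w, K (Measure.dirac y).toSignedMeasure⟫ : ℝ)
            ∂μ.toJordanDecomposition.posPart) -
        (∫ y, (⟪w, K (Measure.dirac y).toSignedMeasure⟫ : ℝ)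
            ∂μ.toJordanDecomposition.negPart))
    (z : Ω) (hz : ∀ y : Ω, ‖K (Measure.dirac y).toSignedMeasure‖ ≤
      ‖K (Measure.dirac z).toSignedMeasure‖)
    (hzpos : 0 < ‖K (Measure.dirac z).toSignedMeasure‖) :
    let c : ℝ := 1 / ‖K (Measure.dirac z).toSignedMeasure‖
    let μ₀ : SignedMeasure Ω := c • (Measure.dirac z).toSignedMeasure
    (∀ μ : SignedMeasure Ω,
      ‖K μ‖ ≤ (μ.totalVariation Set.univ).toReal * ‖K (Measure.dirac z).toSignedMeasure‖) ∧
    ‖K μ₀‖ = (μ₀.totalVariation Set.univ).toReal * ‖K (Measure.dirac z).toSignedMeasure‖ ∧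
    ‖K μ₀‖ = 1 ∧
    (μ₀.totalVariation Set.univ).toReal = c := by
  intro c μ₀
  have hc : 0 ≤ c := by positivity
  have htv : (μ₀.totalVariation Set.univ).toReal = c := by
    simp [μ₀, SignedMeasure.totalVariation_smul_toSignedMeasure hc, hc]
  have hKμ₀ : ‖K μ₀‖ = 1 := by
    rw [map_smul, norm_smul, Real.norm_of_nonneg hc, one_div_mul_cancel hzpos.ne']
  refine ⟨norm_le_totalVariation_mul_norm_dirac hrep hz, ?_, hKμ₀, htv⟩
  rw [hKμ₀, htv, one_div_mul_cancel hzpos.ne']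

/-- Ground states of support pursuit are concentrated measures: if
`K : M(Ω) → H` is linear, weakly represented by its values on Dirac measures,
`y ↦ ‖K δ_y‖` is continuous and maximized at `z` with `‖K δ_z‖ > 0`, then
`‖Kμ‖ ≤ |μ|(Ω) ‖K δ_z‖` for all signed measures `μ`, with equality for
`μ₀ = c δ_z`, `c = 1/‖K δ_z‖`; i.e. `μ₀` is a ground state of the total
variation norm subject to `‖Kμ‖ = 1`, with smallest singular value `λ₀ = c`. -/
theorem support_pursuit_ground_state
    {Ω : Type*} [TopologicalSpace Ω] [CompactSpace Ω] [MeasurableSpace Ω]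
    [OpensMeasurableSpace Ω]
    {H : Type*} [NormedAddCommGroup H] [InnerProductSpace ℝ H]
    (K : SignedMeasure Ω →ₗ[ℝ] H)
    (hrep : ∀ (μ : SignedMeasure Ω) (w : H),
      ⟪w, K μ⟫ =
        (∫ y, (⟪w, K (Measure.dirac y).toSignedMeasure⟫ : ℝ)
            ∂μ.toJordanDecomposition.posPart) -
        (∫ y, (⟪w, K (Measure.dirac y).toSignedMeasure⟫ : ℝ)
            ∂μ.toJordanDecomposition.negPart))
    (hcont : Continuous fun y : Ω => ‖K (Measure.dirac y).toSignedMeasure‖)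
    (z : Ω) (hz : ∀ y : Ω, ‖K (Measure.dirac y).toSignedMeasure‖ ≤
      ‖K (Measure.dirac z).toSignedMeasure‖)
    (hzpos : 0 < ‖K (Measure.dirac z).toSignedMeasure‖) :
    let c : ℝ := 1 / ‖K (Measure.dirac z).toSignedMeasure‖
    let μ₀ : SignedMeasure Ω := c • (Measure.dirac z).toSignedMeasure
    (∀ μ : SignedMeasure Ω,
      ‖K μ‖ ≤ (μ.totalVariation Set.univ).toReal * ‖K (Measure.dirac z).toSignedMeasure‖) ∧
    ‖K μ₀‖ = (μ₀.totalVariation Set.univ).toReal * ‖K (Measure.dirac z).toSignedMeasure‖ ∧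
    ‖K μ₀‖ = 1 ∧
    (μ₀.totalVariation Set.univ).toReal = c :=
  support_pursuit_ground_state_general K hrep z hz hzpos
end

section
/- Let J₁, J₂ be convex, non-negative, positively one-homogeneous functionals on a Banach space U, and K : U → H bounded linear. Suppose v₀ is a ground state of J₁ (minimizing J₁ over ‖Kv‖ = 1, with value λ₁ = J₁(v₀) > 0) and w₀ is a ground state of J₂ with value λ₂ = J₂(w₀), and λ₁ ≤ λ₂. Then for all v, w ∈ U: J₁(v) + J₂(w) ≥ λ₁·‖K(v+w)‖_H, with equality when v = v₀, w = 0. Hence v₀ (paired with w = 0) is a ground state of the infimal convolution J(u) = inf_v (J₁(v) + J₂(u−v)). -/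
/-- Ground states of infimal convolutions: if `v₀` is a ground state of `J₁`
with value `λ₁ = J₁ v₀ > 0`, `w₀` a ground state of `J₂` with value
`λ₂ = J₂ w₀`, and `λ₁ ≤ λ₂`, then `J₁ v + J₂ w ≥ λ₁ ‖K(v+w)‖` for all `v, w`,
with equality at `v = v₀`, `w = 0`; hence `v₀` (paired with `w = 0`) is a
ground state of the infimal convolution of `J₁` and `J₂`. -/
theorem inf_convolution_ground_state
    {U H : Type*} [NormedAddCommGroup U] [NormedSpace ℝ U]
    [NormedAddCommGroup H] [InnerProductSpace ℝ H]
    (K : U →L[ℝ] H) (J₁ J₂ : U → ℝ)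
    (hJ₁nn : ∀ u, 0 ≤ J₁ u) (hJ₂nn : ∀ u, 0 ≤ J₂ u)
    (hconv₁ : ∀ (u v : U) (t : ℝ), 0 ≤ t → t ≤ 1 →
      J₁ (t • u + (1 - t) • v) ≤ t * J₁ u + (1 - t) * J₁ v)
    (hconv₂ : ∀ (u v : U) (t : ℝ), 0 ≤ t → t ≤ 1 →
      J₂ (t • u + (1 - t) • v) ≤ t * J₂ u + (1 - t) * J₂ v)
    (hhom₁ : ∀ (c : ℝ), 0 < c → ∀ u, J₁ (c • u) = c * J₁ u)
    (hhom₂ : ∀ (c : ℝ), 0 < c → ∀ u, J₂ (c • u) = c * J₂ u)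
    (hJ₂0 : J₂ 0 = 0)
    (v₀ w₀ : U) (lam₁ lam₂ : ℝ)
    (hlam₁ : lam₁ = J₁ v₀) (hlam₂ : lam₂ = J₂ w₀)
    (hnorm₀ : ‖K v₀‖ = 1)
    (hg₁ : ∀ v : U, ‖K v‖ = 1 → lam₁ ≤ J₁ v)
    (hg₂ : ∀ w : U, ‖K w‖ = 1 → lam₂ ≤ J₂ w)
    (hlam₁pos : 0 < lam₁) (hle : lam₁ ≤ lam₂) :
    (∀ v w : U, lam₁ * ‖K (v + w)‖ ≤ J₁ v + J₂ w) ∧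
    J₁ v₀ + J₂ 0 = lam₁ * ‖K (v₀ + 0)‖ := by
  have key : ∀ (J : U → ℝ) (lam : ℝ), 0 ≤ lam → (∀ u, 0 ≤ J u) →
      (∀ (c : ℝ), 0 < c → ∀ u, J (c • u) = c * J u) →
      (∀ v : U, ‖K v‖ = 1 → lam ≤ J v) → ∀ v : U, lam * ‖K v‖ ≤ J v := by
    intro J lam hlamnn hnn hhom hg v
    rcases eq_or_lt_of_le (norm_nonneg (K v)) with h0 | hpos
    · rw [← h0, mul_zero]; exact hnn v
    · have hc : (0:ℝ) < ‖K v‖⁻¹ := inv_pos.mpr hpos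
      have hn : ‖K (‖K v‖⁻¹ • v)‖ = 1 := by
        rw [map_smul, norm_smul, Real.norm_eq_abs, abs_of_pos hc]
        field_simp
      have := hg _ hn
      rw [hhom _ hc] at this
      have h := mul_le_mul_of_nonneg_right this hpos.le
      rw [mul_assoc, mul_comm (J v), ← mul_assoc, inv_mul_cancel₀ hpos.ne', one_mul] at h
      linarith
  have h1 : ∀ v : U, lam₁ * ‖K v‖ ≤ J₁ v := key J₁ lam₁ hlam₁pos.le hJ₁nn hhom₁ hg₁
  have h2 : ∀ w : U, lam₁ * ‖K w‖ ≤ J₂ w := fun w =>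
    le_trans (mul_le_mul_of_nonneg_right hle (norm_nonneg _))
      (key J₂ lam₂ (hlam₁pos.le.trans hle) hJ₂nn hhom₂ hg₂ w)
  constructor
  · intro v w
    calc lam₁ * ‖K (v + w)‖ ≤ lam₁ * (‖K v‖ + ‖K w‖) := by
          rw [map_add]
          exact mul_le_mul_of_nonneg_left (norm_add_le _ _) hlam₁pos.le
      _ = lam₁ * ‖K v‖ + lam₁ * ‖K w‖ := by ring
      _ ≤ J₁ v + J₂ w := add_le_add (h1 v) (h2 w)
  · rw [add_zero, hnorm₀, mul_one, hJ₂0, add_zero, hlam₁]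
end
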